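/- arXiv:1812.07550 — 3 statements merged into one kernel-verified Lean document; each statement's English description precedes it below -/
import Mathlib

section
/- Let j ≥ 1 and let γ = (γ₁, …, γ_j) be positive integers satisfying γ_i − γ_{i+1} ≥ 2 for 1 ≤ i ≤ j−1 and γ_i − γ_{i+1} ≥ 3 whenever γ_i is even. Define π_k = γ_k + 4k − 2j − 2 + P(γ_k) + 2·∑_{i=k+1}^{j} P(γ_i) for 1 ≤ k ≤ j. Then π₁ ≥ π₂ ≥ ⋯ ≥ π_j. -/
/-! Peeling the term `k + 1` off the tail sum gives
`π_k - π_{k+1} = (γ_k - γ_{k+1}) - 4 + P(γ_k) + P(γ_{k+1})`. The gap conditions make this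
nonnegative: an odd gap `γ_k - γ_{k+1}` forces exactly one of `γ_k, γ_{k+1}` to be odd, and an
even gap that is at least `3` when `γ_k` is even is then at least `4`. -/

def P (m : ℤ) : ℤ := if Even m then 0 else 1

theorem P_eq_emod_two (m : ℤ) : P m = m % 2 := by
  rw [P]
  split_ifs with h
  · exact (Int.even_iff.mp h).symm
  · exact (Int.not_even_iff.mp h).symm

theorem four_le_sub_add_P_add_P {a b : ℤ} (hgap : 2 ≤ a - b) (heven : Even a → 3 ≤ a - b) :
    4 ≤ a - b + P a + P b := by
  rw [Int.even_iff] at heven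
  rw [P_eq_emod_two, P_eq_emod_two]
  omega

theorem Finset.sum_Ioi_of_covBy {α M : Type*} [LinearOrder α] [LocallyFiniteOrderTop α]
    [AddCommMonoid M] {a b : α} (h : a ⋖ b) (f : α → M) :
    ∑ x ∈ Ioi a, f x = f b + ∑ x ∈ Ioi b, f x := by
  have : Ioi a = Ici b := coe_injective <| by simpa using h.Ioi_eq
  rw [this, Ici_eq_cons_Ioi, sum_cons]

theorem Fin.mk_covBy_mk_succ {n i : ℕ} (h : i + 1 < n) :
    (⟨i, Nat.lt_of_succ_lt h⟩ : Fin n) ⋖ ⟨i + 1, h⟩ :=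
  ⟨Fin.mk_lt_mk.mpr i.lt_succ_self, fun c hic hci => by
    rw [Fin.lt_def] at hic hci; simp only at hic hci; omega⟩

theorem pi_decreasing_general (j : ℕ) (γ : Fin j → ℤ)
    (hgap : ∀ i : ℕ, ∀ h : i + 1 < j,
      2 ≤ γ ⟨i, Nat.lt_of_succ_lt h⟩ - γ ⟨i + 1, h⟩ ∧
      (Even (γ ⟨i, Nat.lt_of_succ_lt h⟩) →
        3 ≤ γ ⟨i, Nat.lt_of_succ_lt h⟩ - γ ⟨i + 1, h⟩))
    (π : Fin j → ℤ)
    (hπ : ∀ k : Fin j, π k = γ k + 4 * ((k : ℤ) + 1) - 2 * (j : ℤ) - 2 + P (γ k)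
      + 2 * ∑ i ∈ Finset.Ioi k, P (γ i)) :
    ∀ i : ℕ, ∀ h : i + 1 < j, π ⟨i + 1, h⟩ ≤ π ⟨i, Nat.lt_of_succ_lt h⟩ := by
  intro i h
  have key := four_le_sub_add_P_add_P (hgap i h).1 (hgap i h).2
  rw [hπ, hπ, Finset.sum_Ioi_of_covBy (Fin.mk_covBy_mk_succ h)]
  push_cast
  linarith

/-- Claim 2: `π₁ ≥ π₂ ≥ ⋯ ≥ π_j`.  (Indices are 0-based.) -/
theorem pi_decreasing (j : ℕ) (hj : 1 ≤ j) (γ : Fin j → ℤ)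
    (hpos : ∀ k, 1 ≤ γ k)
    (hgap : ∀ i : ℕ, ∀ h : i + 1 < j,
      2 ≤ γ ⟨i, Nat.lt_of_succ_lt h⟩ - γ ⟨i + 1, h⟩ ∧
      (Even (γ ⟨i, Nat.lt_of_succ_lt h⟩) →
        3 ≤ γ ⟨i, Nat.lt_of_succ_lt h⟩ - γ ⟨i + 1, h⟩))
    (π : Fin j → ℤ)
    (hπ : ∀ k : Fin j, π k = γ k + 4 * ((k : ℤ) + 1) - 2 * (j : ℤ) - 2 + P (γ k)
      + 2 * ∑ i ∈ Finset.Ioi k, P (γ i)) :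
    ∀ i : ℕ, ∀ h : i + 1 < j, π ⟨i + 1, h⟩ ≤ π ⟨i, Nat.lt_of_succ_lt h⟩ :=
  pi_decreasing_general j γ hgap π hπ
end

section
/- Fix positive integers n and j. The map h : S_{n,j} → G_{n,j}, sending σ = (π, ν) with ν = ⟨1^{f₁} 3^{f₃} ⋯ (2j−1)^{f_{2j−1}}⟩ to γ = (γ₁, …, γ_j) where γ_k = π_k − 4k + 2j + 2 − f_{2k−1} − 2·∑_{i=k+1}^{j} f_{2i−1} for 1 ≤ k ≤ j, is well defined and is a bijection; it is the inverse of the map g : G_{n,j} → S_{n,j} given by g(γ) = (π, ν) with π_k = γ_k + 4k − 2j − 2 + P(γ_k) + 2·∑_{i=k+1}^{j} P(γ_i) and f_{2k−1} = P(γ_k). -/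
/-- The map `g` of the bijection: `γ = (γ₁, …, γ_j) ↦ (π, ν)` where
`π_k = γ_k + 4k - 2j - 2 + P(γ_k) + 2 ∑_{i=k+1}^j P(γ_i)` and `ν` contains the part
`2k - 1` exactly for those `k` with `γ_k` odd.  (Indices here are 0-based, so the
`k`-th entry of the tuple, `k : Fin j`, is the `(k+1)`-st part.) -/
def gMap (j : ℕ) (γ : Fin j → ℤ) : (Fin j → ℤ) × Finset ℤ :=
  (fun k => γ k + 4 * ((k : ℤ) + 1) - 2 * j - 2 + P (γ k)
      + 2 * ∑ i ∈ Finset.Ioi k, P (γ i),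
   Finset.image (fun k : Fin j => 2 * (k : ℤ) + 1)
     (Finset.univ.filter fun k => Odd (γ k)))

/-- The inverse map `h`: `(π, ν) ↦ γ` where
`γ_k = π_k - 4k + 2j + 2 - f_{2k-1} - 2 ∑_{i=k+1}^j f_{2i-1}`, `f_{2k-1}` being the
multiplicity (0 or 1) of the part `2k - 1` in `ν`. -/
def hMap (j : ℕ) (σ : (Fin j → ℤ) × Finset ℤ) : Fin j → ℤ :=
  fun k => σ.1 k - 4 * ((k : ℤ) + 1) + 2 * (j : ℤ) + 2
    - (if 2 * (k : ℤ) + 1 ∈ σ.2 then 1 else 0)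
    - 2 * ∑ i ∈ Finset.Ioi k, (if 2 * (i : ℤ) + 1 ∈ σ.2 then 1 else 0)

/-- `Gset n j` : Göllnitz–Gordon partitions of `n` with exactly `j` parts, as
weakly decreasing `j`-tuples `γ` of positive integers with `γ_i - γ_{i+1} ≥ 2`,
and `γ_i - γ_{i+1} ≥ 3` whenever `γ_i` is even. -/
def Gset (n j : ℕ) : Set (Fin j → ℤ) :=
  {γ | (∀ k, 1 ≤ γ k) ∧
    (∀ i : ℕ, ∀ h : i + 1 < j,
      2 ≤ γ ⟨i, Nat.lt_of_succ_lt h⟩ - γ ⟨i + 1, h⟩ ∧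
      (Even (γ ⟨i, Nat.lt_of_succ_lt h⟩) → 3 ≤ γ ⟨i, Nat.lt_of_succ_lt h⟩ - γ ⟨i + 1, h⟩)) ∧
    ∑ k, γ k = (n : ℤ)}

/-- `Sset n j` : signed Göllnitz–Gordon partitions of `n` whose positive
subpartition `π` has exactly `j` parts: `π` is a weakly decreasing `j`-tuple of even
parts, each at least `2j`, and the negative subpartition `ν` is a set of distinct odd
positive parts, each at most `2j - 1` (hence there are at most `j` of them), with
`|π| - |ν| = n`. -/
def Sset (n j : ℕ) : Set ((Fin j → ℤ) × Finset ℤ) :=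
  {σ | Antitone σ.1 ∧ (∀ k, 1 ≤ σ.1 k) ∧
    (∀ k, Even (σ.1 k) ∧ 2 * (j : ℤ) ≤ σ.1 k) ∧
    σ.2.card ≤ j ∧
    (∀ m ∈ σ.2, Odd m ∧ 1 ≤ m ∧ m ≤ 2 * (j : ℤ) - 1) ∧
    (∑ k, σ.1 k) - (∑ m ∈ σ.2, m) = (n : ℤ)}

/-! Both maps move a tuple by the same correction `shift j e`, with `e` the parity vector
`P ∘ γ` for `g` and the multiplicity vector `f` of `ν` for `h`; since `π` is even and
`shift j e ≡ e (mod 2)`, the parities of `h σ` are exactly the multiplicities of `ν`,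
so the two maps are mutually inverse. Consecutive corrections differ by `e_k + e_{k+1} - 4`,
which turns the gap conditions on `γ` into the monotonicity of `π`, and the corrections
sum to `∑ (2k + 1) e_k = |ν|`, so that `|π| - |ν| = |γ|`. -/

open Finset

lemma Fin.antitone_of_succ_le {α : Type*} [Preorder α] {j : ℕ} {f : Fin j → α}
    (h : ∀ i (hi : i + 1 < j), f ⟨i + 1, hi⟩ ≤ f ⟨i, Nat.lt_of_succ_lt hi⟩) :
    Antitone f := by
  cases j with
  | zero => exact fun a => a.elim0
  | succ j => exact Fin.antitone_iff_succ_le.2 fun i => h i (by simp)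

lemma Fin.sum_Ioi_mk_eq_add {M : Type*} [AddCommMonoid M] {j i : ℕ} (hi : i + 1 < j)
    (e : Fin j → M) :
    ∑ l ∈ Ioi (⟨i, Nat.lt_of_succ_lt hi⟩ : Fin j), e l
      = e ⟨i + 1, hi⟩ + ∑ l ∈ Ioi (⟨i + 1, hi⟩ : Fin j), e l := by
  have : Ioi (⟨i, Nat.lt_of_succ_lt hi⟩ : Fin j)
      = insert ⟨i + 1, hi⟩ (Ioi ⟨i + 1, hi⟩) := by
    ext l
    simp only [mem_Ioi, mem_insert, Fin.lt_def, Fin.ext_iff]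
    omega
  rw [this, sum_insert (by simp)]

lemma Fin.sum_sum_Ioi {M : Type*} [AddCommMonoid M] {j : ℕ} (e : Fin j → M) :
    ∑ k, ∑ l ∈ Ioi k, e l = ∑ l : Fin j, (l : ℕ) • e l := by
  rw [sum_comm' (t' := univ) (s' := Iio) (by simp)]
  simp only [Finset.sum_const, Fin.card_Iio]

namespace GollnitzGordon

lemma P_eq_zero {m : ℤ} (h : Even m) : P m = 0 := if_pos h

lemma P_eq_one {m : ℤ} (h : Odd m) : P m = 1 := if_neg (Int.not_even_iff_odd.2 h)

lemma P_eq_one_iff {m : ℤ} : P m = 1 ↔ Odd m := by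
  rcases Int.even_or_odd m with h | h
  · simp [P_eq_zero h, Int.not_odd_iff_even.2 h]
  · simp [P_eq_one h, h]

lemma even_add_P (m : ℤ) : Even (m + P m) := by
  rcases Int.even_or_odd m with h | h
  · simpa [P_eq_zero h] using h
  · simpa [P_eq_one h] using h.add_one

lemma P_eq_of_even_add {m e : ℤ} (he : e = 0 ∨ e = 1) (h : Even (m + e)) : P m = e := by
  rcases he with rfl | rfl
  · exact P_eq_zero (by simpa using h)
  · exact P_eq_one (by simpa [Int.even_add_one] using h)

lemma two_le_add_P {m : ℤ} (h : 1 ≤ m) : 2 ≤ m + P m := by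
  rcases Int.even_or_odd m with hm | hm
  · obtain ⟨x, rfl⟩ := hm
    rw [P_eq_zero ⟨x, rfl⟩]; omega
  · rw [P_eq_one hm]; omega

lemma four_le_sub_add_P_add_P {a b : ℤ} (h2 : 2 ≤ a - b) (h3 : Even a → 3 ≤ a - b) :
    4 ≤ a - b + P a + P b := by
  rcases Int.even_or_odd a with ha | ha <;> rcases Int.even_or_odd b with hb | hb
  · obtain ⟨x, rfl⟩ := ha; obtain ⟨y, rfl⟩ := hb
    rw [P_eq_zero ⟨x, rfl⟩, P_eq_zero ⟨y, rfl⟩]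
    have := h3 ⟨x, rfl⟩; omega
  · rw [P_eq_zero ha, P_eq_one hb]; have := h3 ha; omega
  · obtain ⟨x, rfl⟩ := ha; obtain ⟨y, rfl⟩ := hb
    rw [P_eq_one ⟨x, rfl⟩, P_eq_zero ⟨y, rfl⟩]; omega
  · rw [P_eq_one ha, P_eq_one hb]; omega

lemma sum_four_mul_succ_sub (j : ℕ) : ∑ k : Fin j, (4 * ((k : ℤ) + 1) - 2 * j - 2) = 0 := by
  have hrev := Equiv.sum_comp Fin.revPerm fun k : Fin j => 4 * ((k : ℤ) + 1) - 2 * j - 2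
  have hpair : ∑ k : Fin j, ((4 * ((((Fin.revPerm k : Fin j) : ℕ) : ℤ) + 1) - 2 * j - 2)
      + (4 * (((k : ℕ) : ℤ) + 1) - 2 * j - 2)) = 0 :=
    sum_eq_zero fun k _ => by
      have := k.isLt
      simp only [Fin.revPerm_apply, Fin.val_rev]
      omega
  rw [sum_add_distrib, hrev] at hpair
  linarith

/-- The correction `π - γ` of the paper, `4k - 2j - 2 + e_k + 2 ∑_{i > k} e_i`
(1-based `k`), for an arbitrary vector `e` in place of the parities or multiplicities. -/
def shift (j : ℕ) (e : Fin j → ℤ) (k : Fin j) : ℤ :=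
  4 * ((k : ℤ) + 1) - 2 * j - 2 + e k + 2 * ∑ i ∈ Ioi k, e i

lemma sum_shift (j : ℕ) (e : Fin j → ℤ) :
    ∑ k, shift j e k = ∑ k : Fin j, (2 * (k : ℤ) + 1) * e k := by
  simp only [shift, sum_add_distrib, ← mul_sum, Fin.sum_sum_Ioi, sum_four_mul_succ_sub,
    nsmul_eq_mul, add_mul, one_mul, mul_assoc]
  ring

lemma shift_sub_shift_succ {j i : ℕ} (hi : i + 1 < j) (e : Fin j → ℤ) :
    shift j e ⟨i, Nat.lt_of_succ_lt hi⟩ - shift j e ⟨i + 1, hi⟩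
      = e ⟨i, Nat.lt_of_succ_lt hi⟩ + e ⟨i + 1, hi⟩ - 4 := by
  simp only [shift, Fin.sum_Ioi_mk_eq_add hi]
  push_cast
  ring

lemma shift_of_succ_eq {j : ℕ} {k : Fin j} (hk : (k : ℕ) + 1 = j) (e : Fin j → ℤ) :
    shift j e k = 2 * j - 2 + e k := by
  have : Ioi k = ∅ := by
    ext i
    simp only [mem_Ioi, Fin.lt_def, notMem_empty, iff_false]
    omega
  simp only [shift, this, sum_empty]
  omega

lemma even_shift_sub {j : ℕ} (e : Fin j → ℤ) (k : Fin j) : Even (shift j e k - e k) :=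
  ⟨2 * (k : ℤ) + 1 - j + ∑ i ∈ Ioi k, e i, by simp only [shift]; ring⟩

lemma shift_le {j : ℕ} {e : Fin j → ℤ} (he : ∀ i, e i ≤ 1) (k : Fin j) :
    shift j e k ≤ 2 * k + 1 := by
  have hsum : ∑ i ∈ Ioi k, e i ≤ (j - 1 - k : ℕ) := by
    simpa [Fin.card_Ioi] using sum_le_card_nsmul (Ioi k) e 1 fun i _ => he i
  have := k.isLt
  have := he k
  simp only [shift]
  omega

/-- The multiplicity `f_{2k+1}` of the part `2k + 1` in `ν` (0-based `k`). -/
def oddMult {j : ℕ} (ν : Finset ℤ) (k : Fin j) : ℤ :=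
  if 2 * (k : ℤ) + 1 ∈ ν then 1 else 0

lemma oddMult_eq_zero_or_one {j : ℕ} (ν : Finset ℤ) (k : Fin j) :
    oddMult ν k = 0 ∨ oddMult ν k = 1 := by
  unfold oddMult; split_ifs <;> simp

lemma oddMult_nonneg {j : ℕ} (ν : Finset ℤ) (k : Fin j) : 0 ≤ oddMult ν k := by
  unfold oddMult; split_ifs <;> simp

lemma oddMult_le_one {j : ℕ} (ν : Finset ℤ) (k : Fin j) : oddMult ν k ≤ 1 := by
  unfold oddMult; split_ifs <;> simp

lemma oddMult_eq_one_iff {j : ℕ} {ν : Finset ℤ} {k : Fin j} :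
    oddMult ν k = 1 ↔ 2 * (k : ℤ) + 1 ∈ ν := by
  unfold oddMult; split_ifs <;> simp [*]

lemma two_mul_add_one_injective (j : ℕ) : Function.Injective fun k : Fin j => 2 * (k : ℤ) + 1 :=
  fun a b hab => Fin.ext (by simpa using hab)

lemma exists_two_mul_add_one_eq {j : ℕ} {m : ℤ}
    (hm : Odd m ∧ 1 ≤ m ∧ m ≤ 2 * (j : ℤ) - 1) :
    ∃ k : Fin j, 2 * (k : ℤ) + 1 = m := by
  obtain ⟨⟨r, rfl⟩, h1, h2⟩ := hm
  exact ⟨⟨r.toNat, by omega⟩, by simp only; omega⟩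

section OddParts

variable {j : ℕ} {ν : Finset ℤ}

lemma image_filter_mem_eq (hν : ∀ m ∈ ν, ∃ k : Fin j, 2 * (k : ℤ) + 1 = m) :
    (univ.filter fun k : Fin j => 2 * (k : ℤ) + 1 ∈ ν).image
      (fun k : Fin j => 2 * (k : ℤ) + 1) = ν := by
  ext m
  simp only [mem_image, mem_filter, mem_univ, true_and]
  constructor
  · rintro ⟨k, hk, rfl⟩
    exact hk
  · intro hm
    obtain ⟨k, rfl⟩ := hν m hm
    exact ⟨k, hm, rfl⟩

lemma sum_eq_sum_mul_oddMult (hν : ∀ m ∈ ν, ∃ k : Fin j, 2 * (k : ℤ) + 1 = m) :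
    ∑ m ∈ ν, m = ∑ k : Fin j, (2 * (k : ℤ) + 1) * oddMult ν k := by
  conv_lhs => rw [← image_filter_mem_eq hν]
  rw [sum_image fun a _ b _ hab => two_mul_add_one_injective j hab, sum_filter]
  exact sum_congr rfl fun k _ => by unfold oddMult; split_ifs <;> simp

end OddParts

section Maps

variable {j : ℕ}

lemma gMap_fst (γ : Fin j → ℤ) : (gMap j γ).1 = γ + shift j (P ∘ γ) := by
  funext k
  simp only [gMap, shift, Pi.add_apply, Function.comp_apply]
  ring

lemma hMap_eq (σ : (Fin j → ℤ) × Finset ℤ) : hMap j σ = σ.1 - shift j (oddMult σ.2) := by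
  funext k
  simp only [hMap, shift, oddMult, Pi.sub_apply]
  ring

lemma mem_gMap_snd_iff (γ : Fin j → ℤ) (k : Fin j) :
    2 * (k : ℤ) + 1 ∈ (gMap j γ).2 ↔ Odd (γ k) := by
  simp only [gMap, mem_image, mem_filter, mem_univ, true_and]
  exact ⟨fun ⟨a, ha, hak⟩ => two_mul_add_one_injective j hak ▸ ha,
    fun h => ⟨k, h, rfl⟩⟩

lemma oddMult_gMap_snd (γ : Fin j → ℤ) : oddMult (gMap j γ).2 = P ∘ γ := by
  funext k
  simp only [oddMult, mem_gMap_snd_iff, Function.comp_apply]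
  split_ifs with h
  · exact (P_eq_one h).symm
  · exact (P_eq_zero (Int.not_odd_iff_even.1 h)).symm

lemma P_hMap {σ : (Fin j → ℤ) × Finset ℤ} (heven : ∀ k, Even (σ.1 k)) :
    P ∘ hMap j σ = oddMult σ.2 := by
  funext k
  refine P_eq_of_even_add (oddMult_eq_zero_or_one σ.2 k) ?_
  rw [hMap_eq, Pi.sub_apply, sub_add]
  exact (heven k).sub (even_shift_sub (oddMult σ.2) k)

lemma hMap_gMap (γ : Fin j → ℤ) : hMap j (gMap j γ) = γ := by
  rw [hMap_eq, gMap_fst, oddMult_gMap_snd, add_sub_cancel_right]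

lemma gMap_hMap {σ : (Fin j → ℤ) × Finset ℤ} (heven : ∀ k, Even (σ.1 k))
    (hν : ∀ m ∈ σ.2, ∃ k : Fin j, 2 * (k : ℤ) + 1 = m) : gMap j (hMap j σ) = σ := by
  refine Prod.ext ?_ ?_
  · rw [gMap_fst, P_hMap heven, hMap_eq, sub_add_cancel]
  · have hodd : ∀ k, Odd (hMap j σ k) ↔ 2 * (k : ℤ) + 1 ∈ σ.2 := fun k => by
      rw [← P_eq_one_iff, ← oddMult_eq_one_iff, ← P_hMap heven, Function.comp_apply]
    simp only [gMap, hodd]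
    exact image_filter_mem_eq hν

lemma gMap_mapsTo (n j : ℕ) : Set.MapsTo (gMap j) (Gset n j) (Sset n j) := by
  rintro γ ⟨hpos, hgap, hsum⟩
  have hπ : ∀ k, (gMap j γ).1 k = γ k + shift j (P ∘ γ) k := fun k => by rw [gMap_fst]; rfl
  have hanti : Antitone (gMap j γ).1 := Fin.antitone_of_succ_le fun i hi => by
    have := shift_sub_shift_succ hi (P ∘ γ)
    have := four_le_sub_add_P_add_P (hgap i hi).1 (hgap i hi).2
    simp only [hπ, Function.comp_apply] at *
    linarith
  -- `π` is antitone and its last entry is `γ_j + P(γ_j) + 2j - 2`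
  have hlow : ∀ k, 2 * (j : ℤ) ≤ (gMap j γ).1 k := fun k => by
    have hk := k.isLt
    let last : Fin j := ⟨j - 1, by omega⟩
    have := hanti (show k ≤ last from Fin.le_def.2 (by simp only [last]; omega))
    have := shift_of_succ_eq (k := last) (by simp only [last]; omega) (P ∘ γ)
    have := two_le_add_P (hpos last)
    simp only [hπ, Function.comp_apply] at *
    linarith
  refine ⟨hanti, fun k => ?_, fun k => ⟨?_, hlow k⟩, ?_, fun m hm => ?_, ?_⟩
  · have := hlow k
    have := k.isLt
    omega
  · rw [hπ, ← add_add_sub_cancel (c := P (γ k))]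
    exact (even_add_P (γ k)).add (even_shift_sub (P ∘ γ) k)
  · exact card_image_le.trans ((card_filter_le _ _).trans (by simp))
  · obtain ⟨k, -, rfl⟩ := mem_image.1 hm
    have := k.isLt
    exact ⟨⟨k, by ring⟩, by omega, by omega⟩
  · have hν : ∀ m ∈ (gMap j γ).2, ∃ k : Fin j, 2 * (k : ℤ) + 1 = m := fun m hm => by
      obtain ⟨k, -, hk⟩ := mem_image.1 hm
      exact ⟨k, hk⟩
    rw [sum_eq_sum_mul_oddMult hν, oddMult_gMap_snd, gMap_fst]
    simp only [Pi.add_apply, sum_add_distrib, sum_shift, Function.comp_apply, hsum]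
    ring

lemma hMap_mapsTo (n j : ℕ) : Set.MapsTo (hMap j) (Sset n j) (Gset n j) := by
  rintro σ ⟨hanti, -, hπ, -, hν, hsum⟩
  have hγ : ∀ k, hMap j σ k = σ.1 k - shift j (oddMult σ.2) k := fun k => by rw [hMap_eq]; rfl
  refine ⟨fun k => ?_, fun i hi => ?_, ?_⟩
  · have := shift_le (oddMult_le_one σ.2) k
    have := (hπ k).2
    have := k.isLt
    rw [hγ]
    omega
  · set a : Fin j := ⟨i, Nat.lt_of_succ_lt hi⟩
    set b : Fin j := ⟨i + 1, hi⟩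
    have hmono : σ.1 b ≤ σ.1 a := hanti (Fin.le_def.2 (Nat.le_succ i))
    have hshift : shift j (oddMult σ.2) a - shift j (oddMult σ.2) b
        = oddMult σ.2 a + oddMult σ.2 b - 4 := shift_sub_shift_succ hi _
    have hPa : P (hMap j σ a) = oddMult σ.2 a := congrFun (P_hMap fun k => (hπ k).1) a
    have := oddMult_le_one σ.2 a
    have := oddMult_nonneg σ.2 b
    have := oddMult_le_one σ.2 b
    rw [hγ, hγ] at *
    refine ⟨by omega, fun heven => ?_⟩
    rw [P_eq_zero heven] at hPa
    omega
  · have hν' := fun m hm => exists_two_mul_add_one_eq (hν m hm)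
    rw [← hsum, sum_eq_sum_mul_oddMult hν', ← sum_shift, hMap_eq]
    simp only [Pi.sub_apply, sum_sub_distrib]

end Maps

end GollnitzGordon

open GollnitzGordon in
theorem hMap_bijOn_invOn_general (n j : ℕ) :
    Set.BijOn (hMap j) (Sset n j) (Gset n j) ∧
    Set.InvOn (hMap j) (gMap j) (Gset n j) (Sset n j) := by
  have hinv : Set.InvOn (hMap j) (gMap j) (Gset n j) (Sset n j) :=
    ⟨fun γ _ => hMap_gMap γ,
      fun σ ⟨_, _, hπ, _, hν, _⟩ =>
        gMap_hMap (fun k => (hπ k).1) fun m hm => exists_two_mul_add_one_eq (hν m hm)⟩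
  exact ⟨hinv.symm.bijOn (hMap_mapsTo n j) (gMap_mapsTo n j), hinv⟩

/-- For all positive `n` and `j`, the map `h : S_{n,j} → G_{n,j}` is well defined
(it maps `S_{n,j}` into `G_{n,j}`) and is a bijection; moreover it is a (two-sided)
inverse of the map `g : G_{n,j} → S_{n,j}`. -/
theorem hMap_bijOn_invOn (n j : ℕ) (hn : 0 < n) (hj : 0 < j) :
    Set.BijOn (hMap j) (Sset n j) (Gset n j) ∧
    Set.InvOn (hMap j) (gMap j) (Gset n j) (Sset n j) :=
  hMap_bijOn_invOn_general n j
end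

section
/- For every nonnegative integer n and positive integer j, G_{n,j} is in bijection with S_{n,j}, and consequently ∑_{j ≥ 0} |G_{n,j}| = ∑_{j ≥ 0} |S_{n,j}|; that is, the number of Göllnitz–Gordon partitions of n equals the number of signed Göllnitz–Gordon partitions of n (where for j = 0 both sets consist of the empty partition when n = 0 and are empty otherwise). -/
/-!
Let `c_k ∈ {0, 1}` be the parity of `γ_k` and `f_k` the multiplicity of `2k - 1` in `ν`. With the
staircase `s(c)_k = 4k - 2j - 2 + c_k + 2 ∑_{i > k} c_i` the two maps read `π = γ + s(c)`,
`ν ↔ c` and `γ = π - s(f)`. Since `s(f)_k ≡ f_k (mod 2)` and `π` is even, `π - s(f)` has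
parity `f`, which makes the maps mutually inverse.
Consecutive differences of the staircase are `c_k + c_{k+1} - 4`, and the Göllnitz–Gordon gap
condition on `(γ_k, γ_{k+1})` is exactly `γ_k - γ_{k+1} + c_k + c_{k+1} ≥ 4`, i.e. `π_k ≥ π_{k+1}`.
Finally `∑_k s(c)_k = ∑_k (2k - 1) c_k = |ν|`, so `|π| - |ν| = |γ|`.
-/

open Finset

lemma P_of_even {m : ℤ} (h : Even m) : P m = 0 := if_pos h

lemma P_of_odd {m : ℤ} (h : Odd m) : P m = 1 := if_neg (Int.not_even_iff_odd.2 h)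

lemma P_eq_one_iff {m : ℤ} : P m = 1 ↔ Odd m := by
  rw [P, ← Int.not_even_iff_odd]
  split_ifs <;> simp [*]

lemma P_two_mul (s : ℤ) : P (2 * s) = 0 := P_of_even (even_two_mul s)

lemma P_two_mul_add_one (s : ℤ) : P (2 * s + 1) = 1 := P_of_odd (odd_two_mul_add_one s)

lemma even_add_P (a : ℤ) : Even (a + P a) := by
  obtain ⟨s, rfl | rfl⟩ := Int.even_or_odd' a
  · simp [P_two_mul]
  · rw [P_two_mul_add_one]; exact ⟨s + 1, by ring⟩

lemma P_eq_of_even_add {a c : ℤ} (hc : c = 0 ∨ c = 1) (h : Even (a + c)) : P a = c := by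
  obtain ⟨t, ht⟩ := h
  obtain ⟨s, rfl | rfl⟩ := Int.even_or_odd' a
  · rw [P_two_mul]; omega
  · rw [P_two_mul_add_one]; omega

lemma one_le_iff_two_le_add_P (a : ℤ) : 1 ≤ a ↔ 2 ≤ a + P a := by
  obtain ⟨s, rfl | rfl⟩ := Int.even_or_odd' a
  · rw [P_two_mul]; omega
  · rw [P_two_mul_add_one]; omega

lemma gg_gap_iff (a b : ℤ) :
    (2 ≤ a - b ∧ (Even a → 3 ≤ a - b)) ↔ 4 ≤ a - b + P a + P b := by
  obtain ⟨s, rfl | rfl⟩ := Int.even_or_odd' a <;> obtain ⟨t, rfl | rfl⟩ := Int.even_or_odd' b <;>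
    simp only [P_two_mul, P_two_mul_add_one, even_two_mul, Int.not_even_two_mul_add_one,
      true_implies, false_implies, and_true] <;> omega

section FinIndex

variable {j : ℕ}

lemma Fin.antitone_iff_forall_succ_le {α : Type*} [Preorder α] {f : Fin j → α} :
    Antitone f ↔ ∀ i (hi : i + 1 < j), f ⟨i + 1, hi⟩ ≤ f ⟨i, Nat.lt_of_succ_lt hi⟩ := by
  cases j with
  | zero => exact iff_of_true (fun a => a.elim0) (fun i hi => by omega)
  | succ m =>
    rw [Fin.antitone_iff_succ_le]
    exact ⟨fun h i hi => h ⟨i, by omega⟩, fun h i => h i (Nat.succ_lt_succ i.2)⟩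

lemma Antitone.apply_last_le {α : Type*} [Preorder α] {f : Fin j → α} (hf : Antitone f)
    (k : Fin j) : f ⟨j - 1, by have := k.isLt; omega⟩ ≤ f k :=
  hf (Fin.le_def.2 (show (k : ℕ) ≤ j - 1 by omega))

lemma Fin.sum_Ioi_eq_add_sum_Ioi_succ {M : Type*} [AddCommMonoid M] (c : Fin j → M) (i : ℕ)
    (hi : i + 1 < j) :
    ∑ x ∈ Ioi (⟨i, Nat.lt_of_succ_lt hi⟩ : Fin j), c x =
      c ⟨i + 1, hi⟩ + ∑ x ∈ Ioi (⟨i + 1, hi⟩ : Fin j), c x := by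
  have : Ioi (⟨i, Nat.lt_of_succ_lt hi⟩ : Fin j) = insert ⟨i + 1, hi⟩ (Ioi ⟨i + 1, hi⟩) := by
    ext x
    simp only [mem_Ioi, mem_insert, Fin.lt_def, Fin.ext_iff]
    omega
  rw [this, sum_insert (by simp)]

lemma Fin.Ioi_last_eq_empty (hj : 0 < j) : Ioi (⟨j - 1, by omega⟩ : Fin j) = ∅ :=
  Finset.Ioi_eq_empty.2 fun x _ => Fin.le_def.2 (show (x : ℕ) ≤ j - 1 by omega)

lemma Fin.sum_sum_Ioi_s15 {R : Type*} [NonAssocSemiring R] (c : Fin j → R) :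
    ∑ k, ∑ i ∈ Ioi k, c i = ∑ i : Fin j, (i : R) * c i := by
  rw [sum_comm' (t' := univ) (s' := fun i => Iio i) (by simp)]
  simp [Fin.card_Iio]

lemma sum_range_four_mul_add_two (j : ℕ) : ∑ k ∈ range j, (4 * (k : ℤ) + 2) = 2 * j * j := by
  induction j with
  | zero => simp
  | succ m ih => rw [sum_range_succ, ih]; push_cast; ring

end FinIndex

def staircase (j : ℕ) (c : Fin j → ℤ) (k : Fin j) : ℤ :=
  4 * ((k : ℤ) + 1) - 2 * j - 2 + c k + 2 * ∑ i ∈ Ioi k, c i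

/-- The paper's `f_{2k-1}`: with 0-based `k : Fin j` the part `2k - 1` becomes `2k + 1`. -/
def oddPartMult {j : ℕ} (ν : Finset ℤ) (k : Fin j) : ℤ := if 2 * (k : ℤ) + 1 ∈ ν then 1 else 0

section Staircase

variable {j : ℕ} (c : Fin j → ℤ)

lemma staircase_sub_staircase_succ (i : ℕ) (hi : i + 1 < j) :
    staircase j c ⟨i, Nat.lt_of_succ_lt hi⟩ - staircase j c ⟨i + 1, hi⟩ =
      c ⟨i, Nat.lt_of_succ_lt hi⟩ + c ⟨i + 1, hi⟩ - 4 := by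
  simp only [staircase, Fin.sum_Ioi_eq_add_sum_Ioi_succ c i hi]
  push_cast
  ring

lemma staircase_last (hj : 0 < j) :
    staircase j c ⟨j - 1, by omega⟩ = 2 * j - 2 + c ⟨j - 1, by omega⟩ := by
  simp only [staircase, Fin.Ioi_last_eq_empty hj, sum_empty]
  push_cast [Nat.cast_pred hj]
  ring

lemma even_staircase_sub (k : Fin j) : Even (staircase j c k - c k) :=
  ⟨2 * (k : ℤ) + 1 - j + ∑ i ∈ Ioi k, c i, by unfold staircase; ring⟩

lemma sum_staircase : ∑ k, staircase j c k = ∑ k : Fin j, (2 * (k : ℤ) + 1) * c k := by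
  have h4 : ∑ k : Fin j, (4 * ((k : ℤ) + 1) - 2 * j - 2) = 0 := by
    rw [Fin.sum_univ_eq_sum_range (fun k => 4 * ((k : ℤ) + 1) - 2 * j - 2)]
    simp only [show ∀ k : ℕ, 4 * ((k : ℤ) + 1) - 2 * j - 2 = (4 * k + 2) - 2 * j by
      intro k; ring]
    rw [sum_sub_distrib, sum_range_four_mul_add_two]
    simp only [sum_const, card_range, nsmul_eq_mul]
    ring
  simp only [staircase, sum_add_distrib, h4, ← mul_sum, Fin.sum_sum_Ioi_s15, zero_add]
  rw [mul_sum, ← sum_add_distrib]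
  exact sum_congr rfl fun k _ => by ring

end Staircase

section GordonMap

variable {n j : ℕ}

lemma gMap_fst_apply (γ : Fin j → ℤ) (k : Fin j) :
    (gMap j γ).1 k = γ k + staircase j (fun i => P (γ i)) k := by
  simp only [gMap, staircase]
  ring

lemma hMap_apply (σ : (Fin j → ℤ) × Finset ℤ) (k : Fin j) :
    hMap j σ k = σ.1 k - staircase j (oddPartMult σ.2) k := by
  simp only [hMap, staircase, oddPartMult]
  ring

lemma mem_gMap_snd (γ : Fin j → ℤ) (k : Fin j) :
    2 * (k : ℤ) + 1 ∈ (gMap j γ).2 ↔ Odd (γ k) := by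
  simp only [gMap, mem_image, mem_filter, mem_univ, true_and]
  refine ⟨fun ⟨k', hk', he⟩ => ?_, fun h => ⟨k, h, rfl⟩⟩
  rwa [← Fin.ext (by omega : (k' : ℕ) = k)]

lemma oddPartMult_gMap_snd (γ : Fin j → ℤ) :
    oddPartMult (gMap j γ).2 = fun k => P (γ k) := by
  funext k
  simp only [oddPartMult, mem_gMap_snd, P, ← Int.not_even_iff_odd, ite_not]

lemma hMap_gMap (γ : Fin j → ℤ) : hMap j (gMap j γ) = γ := by
  funext k
  simp only [hMap_apply, gMap_fst_apply, oddPartMult_gMap_snd, add_sub_cancel_right]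

lemma sum_gMap_snd (γ : Fin j → ℤ) :
    ∑ m ∈ (gMap j γ).2, m = ∑ k : Fin j, (2 * (k : ℤ) + 1) * P (γ k) := by
  rw [gMap, sum_image (fun a _ b _ h => Fin.ext (by omega)), sum_filter]
  refine sum_congr rfl fun k _ => ?_
  rcases Int.even_or_odd (γ k) with h | h
  · rw [if_neg (Int.not_odd_iff_even.2 h), P_of_even h, mul_zero]
  · rw [if_pos h, P_of_odd h, mul_one]

lemma sum_gMap_fst_sub_sum_gMap_snd (γ : Fin j → ℤ) :
    ∑ k, (gMap j γ).1 k - ∑ m ∈ (gMap j γ).2, m = ∑ k, γ k := by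
  simp only [gMap_fst_apply, sum_add_distrib, sum_staircase, sum_gMap_snd, add_sub_cancel_right]

lemma gMap_fst_sub_succ (γ : Fin j → ℤ) (i : ℕ) (hi : i + 1 < j) :
    (gMap j γ).1 ⟨i, Nat.lt_of_succ_lt hi⟩ - (gMap j γ).1 ⟨i + 1, hi⟩ =
      γ ⟨i, Nat.lt_of_succ_lt hi⟩ - γ ⟨i + 1, hi⟩ + P (γ ⟨i, Nat.lt_of_succ_lt hi⟩)
        + P (γ ⟨i + 1, hi⟩) - 4 := by
  have := staircase_sub_staircase_succ (fun i => P (γ i)) i hi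
  simp only [gMap_fst_apply]
  linarith

lemma gMap_fst_last (γ : Fin j → ℤ) (hj : 0 < j) :
    (gMap j γ).1 ⟨j - 1, by omega⟩ =
      γ ⟨j - 1, by omega⟩ + P (γ ⟨j - 1, by omega⟩) + 2 * j - 2 := by
  rw [gMap_fst_apply, staircase_last _ hj]
  ring

lemma even_gMap_fst (γ : Fin j → ℤ) (k : Fin j) : Even ((gMap j γ).1 k) := by
  have h := (even_add_P (γ k)).add (even_staircase_sub (fun i => P (γ i)) k)
  rwa [add_add_sub_cancel, ← gMap_fst_apply] at h

lemma gMap_mem_Sset {γ : Fin j → ℤ} (hγ : γ ∈ Gset n j) : gMap j γ ∈ Sset n j := by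
  obtain ⟨hpos, hgap, hsum⟩ := hγ
  have hanti : Antitone (gMap j γ).1 := Fin.antitone_iff_forall_succ_le.2 fun i hi => by
    have := gMap_fst_sub_succ γ i hi
    have := (gg_gap_iff _ _).1 (hgap i hi)
    omega
  have hbound (k : Fin j) : 2 * (j : ℤ) ≤ (gMap j γ).1 k := by
    have hj : 0 < j := k.pos
    refine le_trans ?_ (hanti.apply_last_le k)
    have := (one_le_iff_two_le_add_P _).1 (hpos ⟨j - 1, by omega⟩)
    rw [gMap_fst_last γ hj]
    omega
  refine ⟨hanti, fun k => ?_, fun k => ⟨even_gMap_fst γ k, hbound k⟩, ?_, ?_, ?_⟩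
  · have := hbound k
    have := k.pos
    omega
  · exact card_image_le.trans ((card_filter_le _ _).trans (by simp))
  · simp only [gMap, mem_image, mem_filter, mem_univ, true_and]
    rintro _ ⟨k, -, rfl⟩
    exact ⟨⟨k, rfl⟩, by omega, by omega⟩
  · rw [sum_gMap_fst_sub_sum_gMap_snd, hsum]

lemma mem_Gset_of_gMap_mem_Sset {γ : Fin j → ℤ} (hσ : gMap j γ ∈ Sset n j) : γ ∈ Gset n j := by
  obtain ⟨hanti, -, hbound, -, -, hsum⟩ := hσ
  have hgap : ∀ i (hi : i + 1 < j), 2 ≤ γ ⟨i, Nat.lt_of_succ_lt hi⟩ - γ ⟨i + 1, hi⟩ ∧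
      (Even (γ ⟨i, Nat.lt_of_succ_lt hi⟩) → 3 ≤ γ ⟨i, Nat.lt_of_succ_lt hi⟩ - γ ⟨i + 1, hi⟩) :=
    fun i hi => (gg_gap_iff _ _).2 <| by
      have := gMap_fst_sub_succ γ i hi
      have := Fin.antitone_iff_forall_succ_le.1 hanti i hi
      omega
  have hanti' : Antitone γ :=
    Fin.antitone_iff_forall_succ_le.2 fun i hi => by have := (hgap i hi).1; omega
  refine ⟨fun k => le_trans ?_ (hanti'.apply_last_le k), hgap, ?_⟩
  · have hj : 0 < j := k.pos
    have := (hbound ⟨j - 1, by omega⟩).2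
    rw [gMap_fst_last γ hj] at this
    exact (one_le_iff_two_le_add_P _).2 (by omega)
  · rw [← sum_gMap_fst_sub_sum_gMap_snd, hsum]

lemma P_hMap {σ : (Fin j → ℤ) × Finset ℤ} (heven : ∀ k, Even (σ.1 k)) (k : Fin j) :
    P (hMap j σ k) = oddPartMult σ.2 k := by
  refine P_eq_of_even_add (by unfold oddPartMult; split_ifs <;> simp) ?_
  have h := (heven k).sub (even_staircase_sub (oddPartMult σ.2) k)
  rwa [sub_sub_eq_add_sub, ← sub_add_eq_add_sub, ← hMap_apply] at h

lemma image_filter_odd_parts {ν : Finset ℤ}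
    (hν : ∀ m ∈ ν, Odd m ∧ 1 ≤ m ∧ m ≤ 2 * (j : ℤ) - 1) :
    image (fun k : Fin j => 2 * (k : ℤ) + 1) (univ.filter fun k => 2 * (k : ℤ) + 1 ∈ ν) = ν := by
  ext m
  simp only [mem_image, mem_filter, mem_univ, true_and]
  refine ⟨fun ⟨k, hk, he⟩ => he ▸ hk, fun hm => ?_⟩
  obtain ⟨⟨t, rfl⟩, h1, h2⟩ := hν m hm
  refine ⟨⟨t.toNat, by omega⟩, ?_⟩
  simpa [show ((t.toNat : ℕ) : ℤ) = t by omega] using hm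

lemma gMap_hMap {σ : (Fin j → ℤ) × Finset ℤ} (hσ : σ ∈ Sset n j) : gMap j (hMap j σ) = σ := by
  obtain ⟨-, -, hbound, -, hν, -⟩ := hσ
  have hP := P_hMap fun k => (hbound k).1
  refine Prod.ext (funext fun k => ?_) ?_
  · rw [gMap_fst_apply, hMap_apply]
    simp only [hP]
    exact sub_add_cancel _ _
  · have hodd (k : Fin j) : Odd (hMap j σ k) ↔ 2 * (k : ℤ) + 1 ∈ σ.2 := by
      rw [← P_eq_one_iff, hP, oddPartMult]
      split_ifs <;> simp [*]
    simp only [gMap, hodd]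
    exact image_filter_odd_parts hν

end GordonMap

def gordonEquiv (n j : ℕ) : Gset n j ≃ Sset n j where
  toFun γ := ⟨gMap j γ, gMap_mem_Sset γ.2⟩
  invFun σ := ⟨hMap j σ, mem_Gset_of_gMap_mem_Sset (by rw [gMap_hMap σ.2]; exact σ.2)⟩
  left_inv γ := Subtype.ext (hMap_gMap γ.1)
  right_inv σ := Subtype.ext (gMap_hMap σ.2)

/-- For every `n ≥ 0` and `j ≥ 1`, `G_{n,j}` is in bijection with `S_{n,j}`;
consequently `∑_{j ≥ 0} |G_{n,j}| = ∑_{j ≥ 0} |S_{n,j}|`, i.e. the number of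
Göllnitz–Gordon partitions of `n` equals the number of signed Göllnitz–Gordon
partitions of `n` (for `j = 0` both sets consist of the empty partition when
`n = 0` and are empty otherwise). -/
theorem gg_signed_gg_bijection (n : ℕ) :
    (∀ j : ℕ, 0 < j → Nonempty (Gset n j ≃ Sset n j)) ∧
    Nat.card (Σ j : ℕ, Gset n j) = Nat.card (Σ j : ℕ, Sset n j) :=
  ⟨fun j _ => ⟨gordonEquiv n j⟩, Nat.card_congr (Equiv.sigmaCongrRight (gordonEquiv n))⟩
end
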